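/- Let J := ∫_{[0,1]³} (1 − (u + v + w))·𝟙_{u+v+w ≤ 1}/(uv + uw + vw) du dv dw. Then lim_{n→∞} n^{−2} · ∑_{(k₁, m₀, m₁, m₂)} 1/(m₀m₁ + m₀m₂ + m₁m₂) = J, where the sum ranges over all quadruples of positive integers (k₁, m₀, m₁, m₂) with k₁ + m₀ + m₁ + m₂ ≤ n. -/

import Mathlib

/-!
Write `f(u, v, w) = (1 - u - v - w)₊ / (uv + uw + vw)`. Summing out `k₁` contributes the factor
`(n - m₀ - m₁ - m₂)₊`, and by homogeneity of `f` the normalized sum is exactly the right-endpoint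
Riemann sum `n⁻³ ∑ f(m/n)` over the grid of mesh `1/n` in `(0, 1]³`. Now `f` is unbounded near the
coordinate planes, but it is antitone in each variable, so the step function taking at each grid
cell the value of `f` at the upper corner lies between `0` and `f`. Since
`uv + uw + vw ≥ (uvw)^(2/3)`, `f` is integrable, and dominated convergence applies.
-/

open MeasureTheory Filter

noncomputable section

namespace SumInvSym

open Set Topology

def unitCube : Set (ℝ × ℝ × ℝ) := Ioc 0 1 ×ˢ Ioc 0 1 ×ˢ Ioc 0 1

def gridCell (n m : ℕ) : Set ℝ := Ioc (((m : ℝ) - 1) / n) (m / n)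

def gridIndex (n : ℕ) : Finset (ℕ × ℕ × ℕ) := Finset.Icc 1 n ×ˢ Finset.Icc 1 n ×ˢ Finset.Icc 1 n

def gridPoint (n : ℕ) (m : ℕ × ℕ × ℕ) : ℝ × ℝ × ℝ := (m.1 / n, m.2.1 / n, m.2.2 / n)

def gridBox (n : ℕ) (m : ℕ × ℕ × ℕ) : Set (ℝ × ℝ × ℝ) :=
  gridCell n m.1 ×ˢ gridCell n m.2.1 ×ˢ gridCell n m.2.2

def ceilIndex (n : ℕ) (x : ℝ × ℝ × ℝ) : ℕ × ℕ × ℕ := (⌈n * x.1⌉₊, ⌈n * x.2.1⌉₊, ⌈n * x.2.2⌉₊)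

def rightRiemannSum (f : ℝ × ℝ × ℝ → ℝ) (n : ℕ) : ℝ :=
  ((n : ℝ) ^ 3)⁻¹ * ∑ m ∈ gridIndex n, f (gridPoint n m)

def rightStepFun (f : ℝ × ℝ × ℝ → ℝ) (n : ℕ) (x : ℝ × ℝ × ℝ) : ℝ :=
  ∑ m ∈ gridIndex n, (gridBox n m).indicator (fun _ => f (gridPoint n m)) x

lemma measurableSet_gridBox (n : ℕ) (m : ℕ × ℕ × ℕ) : MeasurableSet (gridBox n m) :=
  measurableSet_Ioc.prod (measurableSet_Ioc.prod measurableSet_Ioc)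

lemma measurableSet_unitCube : MeasurableSet unitCube :=
  measurableSet_Ioc.prod (measurableSet_Ioc.prod measurableSet_Ioc)

lemma volume_unitCube : volume unitCube = 1 := by
  simp [unitCube, Measure.volume_eq_prod, Measure.prod_prod]

section OneDim

variable {n m : ℕ} {y : ℝ}

lemma mem_gridCell_iff (hm : m ≠ 0) (hn : 0 < n) : y ∈ gridCell n m ↔ ⌈n * y⌉₊ = m := by
  have hn' : (0 : ℝ) < n := Nat.cast_pos.2 hn
  rw [gridCell, mem_Ioc, div_lt_iff₀ hn', le_div_iff₀ hn', Nat.ceil_eq_iff hm,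
    Nat.cast_sub (Nat.one_le_iff_ne_zero.2 hm), Nat.cast_one, mul_comm y]

lemma gridCell_subset_Ioc (hm : m ∈ Finset.Icc 1 n) : gridCell n m ⊆ Ioc 0 1 := by
  rw [Finset.mem_Icc] at hm
  have hn : (0 : ℝ) < n := by exact_mod_cast hm.1.trans hm.2
  refine Ioc_subset_Ioc ?_ ?_
  · exact div_nonneg (sub_nonneg.2 (by exact_mod_cast hm.1)) hn.le
  · exact (div_le_one hn).2 (by exact_mod_cast hm.2)

lemma div_mem_gridCell (hn : 0 < n) : (m : ℝ) / n ∈ gridCell n m :=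
  ⟨by gcongr; linarith, le_rfl⟩

lemma volume_real_gridCell (hn : 0 < n) : volume.real (gridCell n m) = 1 / n := by
  rw [gridCell, Real.volume_real_Ioc_of_le (by gcongr; linarith)]
  ring

lemma ceil_mem_Icc (hn : 0 < n) (hy : y ∈ Ioc 0 1) : ⌈n * y⌉₊ ∈ Finset.Icc 1 n := by
  rw [Finset.mem_Icc, Nat.one_le_ceil_iff, Nat.ceil_le]
  exact ⟨by have := hy.1; positivity, mul_le_of_le_one_right n.cast_nonneg hy.2⟩

lemma le_ceil_div (hn : 0 < n) (y : ℝ) : y ≤ ⌈n * y⌉₊ / n := by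
  rw [le_div_iff₀ (Nat.cast_pos.2 hn), mul_comm]
  exact Nat.le_ceil _

lemma tendsto_ceil_div (hy : 0 ≤ y) : Tendsto (fun n : ℕ => (⌈n * y⌉₊ : ℝ) / n) atTop (𝓝 y) := by
  have hupper : Tendsto (fun n : ℕ => y + 1 / (n : ℝ)) atTop (𝓝 y) := by
    simpa using (tendsto_const_nhds (x := y)).add tendsto_one_div_atTop_nhds_zero_nat
  refine tendsto_of_tendsto_of_tendsto_of_le_of_le' tendsto_const_nhds hupper ?_ ?_ <;>
    filter_upwards [eventually_gt_atTop 0] with n hn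
  · exact le_ceil_div hn y
  · have hn' : (0 : ℝ) < n := Nat.cast_pos.2 hn
    rw [div_le_iff₀ hn', add_mul, one_div_mul_cancel hn'.ne', mul_comm]
    exact (Nat.ceil_lt_add_one (by positivity)).le

end OneDim

section Step

variable {f : ℝ × ℝ × ℝ → ℝ} {n : ℕ} {x : ℝ × ℝ × ℝ}

lemma mem_gridBox_iff (hn : 0 < n) {m : ℕ × ℕ × ℕ} (hm : m ∈ gridIndex n) :
    x ∈ gridBox n m ↔ ceilIndex n x = m := by
  simp only [gridIndex, Finset.mem_product, Finset.mem_Icc] at hm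
  simp only [gridBox, mem_prod, mem_gridCell_iff (by omega : m.1 ≠ 0) hn,
    mem_gridCell_iff (by omega : m.2.1 ≠ 0) hn, mem_gridCell_iff (by omega : m.2.2 ≠ 0) hn,
    ceilIndex, Prod.ext_iff]

lemma ceilIndex_mem_gridIndex (hn : 0 < n) (hx : x ∈ unitCube) : ceilIndex n x ∈ gridIndex n :=
  Finset.mem_product.2 ⟨ceil_mem_Icc hn hx.1,
    Finset.mem_product.2 ⟨ceil_mem_Icc hn hx.2.1, ceil_mem_Icc hn hx.2.2⟩⟩

lemma gridBox_subset_unitCube {m : ℕ × ℕ × ℕ} (hm : m ∈ gridIndex n) : gridBox n m ⊆ unitCube := by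
  simp only [gridIndex, Finset.mem_product] at hm
  exact Set.prod_mono (gridCell_subset_Ioc hm.1)
    (Set.prod_mono (gridCell_subset_Ioc hm.2.1) (gridCell_subset_Ioc hm.2.2))

lemma le_gridPoint_ceilIndex (hn : 0 < n) (x : ℝ × ℝ × ℝ) : x ≤ gridPoint n (ceilIndex n x) :=
  ⟨le_ceil_div hn _, le_ceil_div hn _, le_ceil_div hn _⟩

lemma gridPoint_mem_unitCube {m : ℕ × ℕ × ℕ} (hm : m ∈ gridIndex n) :
    gridPoint n m ∈ unitCube := by
  have hn : 0 < n := by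
    simp only [gridIndex, Finset.mem_product, Finset.mem_Icc] at hm
    omega
  exact gridBox_subset_unitCube hm
    ⟨div_mem_gridCell hn, div_mem_gridCell hn, div_mem_gridCell hn⟩

lemma tendsto_gridPoint_ceilIndex (hx : x ∈ unitCube) :
    Tendsto (fun n => gridPoint n (ceilIndex n x)) atTop (𝓝 x) :=
  (tendsto_ceil_div hx.1.1.le).prodMk_nhds
    ((tendsto_ceil_div hx.2.1.1.le).prodMk_nhds (tendsto_ceil_div hx.2.2.1.le))

lemma rightStepFun_eq (hn : 0 < n) (hx : x ∈ unitCube) :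
    rightStepFun f n x = f (gridPoint n (ceilIndex n x)) := by
  rw [rightStepFun, Finset.sum_eq_single_of_mem _ (ceilIndex_mem_gridIndex hn hx)]
  · exact indicator_of_mem ((mem_gridBox_iff hn (ceilIndex_mem_gridIndex hn hx)).2 rfl) _
  · intro m hm hne
    exact indicator_of_notMem (fun hxm => hne ((mem_gridBox_iff hn hm).1 hxm).symm) _

lemma measurable_rightStepFun (f : ℝ × ℝ × ℝ → ℝ) (n : ℕ) : Measurable (rightStepFun f n) :=
  Finset.measurable_sum _ fun _ _ =>
    measurable_const.indicator (measurableSet_gridBox n _)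

lemma integral_rightStepFun (hn : 0 < n) :
    ∫ x in unitCube, rightStepFun f n x = rightRiemannSum f n := by
  have : IsFiniteMeasure (volume.restrict unitCube) :=
    isFiniteMeasure_restrict.2 (volume_unitCube ▸ ENNReal.one_ne_top)
  unfold rightStepFun
  rw [rightRiemannSum, Finset.mul_sum, integral_finsetSum _ fun m _ =>
    (integrable_const _).indicator (measurableSet_gridBox n m)]
  refine Finset.sum_congr rfl fun m hm => ?_
  rw [setIntegral_indicator (measurableSet_gridBox n m),
    inter_eq_self_of_subset_right (gridBox_subset_unitCube hm),
    setIntegral_const, gridBox, Measure.volume_eq_prod, measureReal_prod_prod,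
    Measure.volume_eq_prod, measureReal_prod_prod]
  simp only [volume_real_gridCell hn, smul_eq_mul]
  ring

end Step

theorem tendsto_rightRiemannSum_of_antitoneOn {f : ℝ × ℝ × ℝ → ℝ} (hanti : AntitoneOn f unitCube)
    (hcont : ContinuousOn f unitCube) (hnonneg : ∀ x ∈ unitCube, 0 ≤ f x)
    (hint : IntegrableOn f unitCube) :
    Tendsto (rightRiemannSum f) atTop (𝓝 (∫ x in unitCube, f x)) := by
  have hlim : Tendsto (fun n => ∫ x in unitCube, rightStepFun f n x) atTop
      (𝓝 (∫ x in unitCube, f x)) := by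
    refine tendsto_integral_filter_of_dominated_convergence f
      (.of_forall fun n => (measurable_rightStepFun f n).aestronglyMeasurable) ?_ hint ?_
    · filter_upwards [eventually_gt_atTop 0] with n hn
      refine (ae_restrict_iff' measurableSet_unitCube).2 (.of_forall fun x hx => ?_)
      have hc := gridPoint_mem_unitCube (ceilIndex_mem_gridIndex hn hx)
      rw [rightStepFun_eq hn hx, Real.norm_of_nonneg (hnonneg _ hc)]
      exact hanti hx hc (le_gridPoint_ceilIndex hn x)
    · refine (ae_restrict_iff' measurableSet_unitCube).2 (.of_forall fun x hx => ?_)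
      refine ((hcont x hx).tendsto.comp (tendsto_nhdsWithin_iff.2
        ⟨tendsto_gridPoint_ceilIndex hx, ?_⟩)).congr' ?_
      all_goals filter_upwards [eventually_gt_atTop 0] with n hn
      · exact gridPoint_mem_unitCube (ceilIndex_mem_gridIndex hn hx)
      · exact (rightStepFun_eq hn hx).symm
  refine hlim.congr' ?_
  filter_upwards [eventually_gt_atTop 0] with n hn
  exact integral_rightStepFun hn

def integrandJ (p : ℝ × ℝ × ℝ) : ℝ :=
  max (1 - (p.1 + p.2.1 + p.2.2)) 0 / (p.1 * p.2.1 + p.1 * p.2.2 + p.2.1 * p.2.2)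

lemma integrandJ_eq_ite (p : ℝ × ℝ × ℝ) : integrandJ p = if p.1 + p.2.1 + p.2.2 ≤ 1 then
    (1 - (p.1 + p.2.1 + p.2.2)) / (p.1 * p.2.1 + p.1 * p.2.2 + p.2.1 * p.2.2) else 0 := by
  split_ifs with h
  · rw [integrandJ, max_eq_left (by linarith)]
  · rw [integrandJ, max_eq_right (by linarith), zero_div]

lemma integrandJ_denom_pos {p : ℝ × ℝ × ℝ} (hp : p ∈ unitCube) :
    0 < p.1 * p.2.1 + p.1 * p.2.2 + p.2.1 * p.2.2 := by
  have := hp.1.1; have := hp.2.1.1; have := hp.2.2.1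
  positivity

lemma integrandJ_nonneg {p : ℝ × ℝ × ℝ} (hp : p ∈ unitCube) : 0 ≤ integrandJ p :=
  div_nonneg (le_max_right _ _) (integrandJ_denom_pos hp).le

lemma antitoneOn_integrandJ : AntitoneOn integrandJ unitCube := by
  rintro p hp q - ⟨h1, h2, h3⟩
  have := hp.1.1; have := hp.2.1.1; have := hp.2.2.1
  refine div_le_div₀ (le_max_right _ _) (max_le_max (by linarith) le_rfl)
    (integrandJ_denom_pos hp) ?_
  gcongr <;> linarith

lemma continuousOn_integrandJ : ContinuousOn integrandJ unitCube := fun p hp =>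
  ContinuousAt.continuousWithinAt <| by
    unfold integrandJ
    exact .div (by fun_prop) (by fun_prop) (integrandJ_denom_pos hp).ne'

lemma inv_denom_le_rpow {u v w : ℝ} (hu : 0 < u) (hv : 0 < v) (hw : 0 < w) :
    (u * v + u * w + v * w)⁻¹ ≤ u ^ (-(2 / 3) : ℝ) * (v ^ (-(2 / 3) : ℝ) * w ^ (-(2 / 3) : ℝ)) := by
  set Q := u * v + u * w + v * w
  have hcube : (u * v * w) ^ 2 ≤ Q ^ 3 :=
    calc (u * v * w) ^ 2 = (u * v) * (u * w) * (v * w) := by ring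
      _ ≤ Q * Q * Q := by gcongr <;> nlinarith [mul_pos hu hv, mul_pos hu hw, mul_pos hv hw]
      _ = Q ^ 3 := by ring
  have hroot : (u * v * w) ^ (2 / 3 : ℝ) ≤ Q := by
    rw [← pow_le_pow_iff_left₀ (by positivity) (by positivity) three_ne_zero,
      ← Real.rpow_natCast, ← Real.rpow_mul (by positivity)]
    norm_num [hcube]
  calc Q⁻¹ ≤ ((u * v * w) ^ (2 / 3 : ℝ))⁻¹ := inv_anti₀ (by positivity) hroot
    _ = _ := by
      rw [← Real.rpow_neg (by positivity), Real.mul_rpow (by positivity) hw.le,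
        Real.mul_rpow hu.le hv.le, mul_assoc]

lemma integrableOn_unitCube_rpow {r : ℝ} (hr : -1 < r) :
    IntegrableOn (fun p : ℝ × ℝ × ℝ => p.1 ^ r * (p.2.1 ^ r * p.2.2 ^ r)) unitCube := by
  have h1 : IntegrableOn (fun u : ℝ => u ^ r) (Ioc 0 1) :=
    (intervalIntegrable_iff_integrableOn_Ioc_of_le zero_le_one).1
      (intervalIntegral.intervalIntegrable_rpow' hr)
  rw [IntegrableOn, unitCube, Measure.volume_eq_prod, ← Measure.prod_restrict,
    Measure.volume_eq_prod, ← Measure.prod_restrict]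
  exact h1.mul_prod (h1.mul_prod h1)

lemma integrableOn_integrandJ : IntegrableOn integrandJ unitCube := by
  refine (integrableOn_unitCube_rpow (by norm_num : (-1 : ℝ) < -(2 / 3))).mono'
    (continuousOn_integrandJ.aestronglyMeasurable measurableSet_unitCube)
    ((ae_restrict_iff' measurableSet_unitCube).2 (.of_forall fun p hp => ?_))
  have := hp.1.1; have := hp.2.1.1; have := hp.2.2.1
  rw [Real.norm_of_nonneg (integrandJ_nonneg hp)]
  refine le_trans ?_ (inv_denom_le_rpow hp.1.1 hp.2.1.1 hp.2.2.1)
  rw [← one_div]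
  exact div_le_div_of_nonneg_right (max_le (by linarith) zero_le_one) (integrandJ_denom_pos hp).le

lemma natCast_sub_eq_max {R : Type*} [Ring R] [LinearOrder R] [IsStrictOrderedRing R] (a b : ℕ) :
    ((a - b : ℕ) : R) = max ((a : R) - b) 0 := by
  rcases le_total b a with h | h
  · rw [Nat.cast_sub h, max_eq_left (sub_nonneg.2 (by exact_mod_cast h))]
  · rw [Nat.sub_eq_zero_of_le h, Nat.cast_zero,
      max_eq_right (sub_nonpos.2 (by exact_mod_cast h))]

lemma integrandJ_div {t : ℝ} (ht : 0 < t) (u v w : ℝ) :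
    integrandJ (u / t, v / t, w / t) = t * max (t - (u + v + w)) 0 / (u * v + u * w + v * w) := by
  rw [integrandJ, show 1 - (u / t + v / t + w / t) = (t - (u + v + w)) / t by field_simp,
    ← zero_div t, max_div_div_right ht.le, zero_div,
    show u / t * (v / t) + u / t * (w / t) + v / t * (w / t) = (u * v + u * w + v * w) / t ^ 2 by
      ring, div_div_eq_mul_div]
  congr 1
  field_simp

lemma sum_Icc_ite_add_le {M : Type*} [AddCommMonoid M] (n s : ℕ) (x : M) :
    ∑ k ∈ Finset.Icc 1 n, (if k + s ≤ n then x else 0) = (n - s) • x := by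
  rw [← Finset.sum_filter, Finset.sum_const,
    show {k ∈ Finset.Icc 1 n | k + s ≤ n} = Finset.Icc 1 (n - s) by ext; simp; omega,
    Nat.card_Icc, Nat.add_sub_cancel]

lemma sum_inv_sym_eq_rightRiemannSum {n : ℕ} (hn : 0 < n) :
    ((n : ℝ) ^ 2)⁻¹ *
        ∑ q ∈ (Finset.Icc 1 n ×ˢ Finset.Icc 1 n ×ˢ Finset.Icc 1 n ×ˢ Finset.Icc 1 n).filter
            (fun q : ℕ × ℕ × ℕ × ℕ => q.1 + q.2.1 + q.2.2.1 + q.2.2.2 ≤ n),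
          (1 : ℝ) / (q.2.1 * q.2.2.1 + q.2.1 * q.2.2.2 + q.2.2.1 * q.2.2.2) =
      rightRiemannSum integrandJ n := by
  have hn' : (0 : ℝ) < n := Nat.cast_pos.2 hn
  rw [rightRiemannSum, Finset.sum_filter, Finset.sum_product, Finset.sum_comm, Finset.mul_sum,
    Finset.mul_sum, gridIndex]
  refine Finset.sum_congr rfl fun m _ => ?_
  simp only [add_assoc, sum_Icc_ite_add_le, gridPoint, integrandJ_div hn', nsmul_eq_mul,
    natCast_sub_eq_max, Nat.cast_add]
  field_simp

lemma setIntegral_unitCube_eq_Icc (f : ℝ × ℝ × ℝ → ℝ) :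
    ∫ p in unitCube, f p = ∫ p in (Icc 0 1 ×ˢ Icc 0 1 ×ˢ Icc 0 1 : Set (ℝ × ℝ × ℝ)), f p := by
  refine setIntegral_congr_set ?_
  rw [Measure.volume_eq_prod, Measure.volume_eq_prod]
  exact Measure.set_prod_ae_eq Ioc_ae_eq_Icc (Measure.set_prod_ae_eq Ioc_ae_eq_Icc Ioc_ae_eq_Icc)

end SumInvSym

end

open SumInvSym in
/-- Asymptotics of the Gaussian main term `A₂,₀`: the normalized sum of
`1/(m₀m₁ + m₀m₂ + m₁m₂)` over quadruples of positive integers with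
`k₁ + m₀ + m₁ + m₂ ≤ n` converges to the constant
`J = ∫_{[0,1]³} (1 − (u+v+w))·𝟙_{u+v+w ≤ 1}/(uv+uw+vw) du dv dw`. -/
theorem sum_inv_sym_tendsto_J :
    Tendsto
      (fun n : ℕ =>
        ((n : ℝ) ^ 2)⁻¹ *
          ∑ q ∈ (Finset.Icc 1 n ×ˢ Finset.Icc 1 n ×ˢ Finset.Icc 1 n ×ˢ Finset.Icc 1 n).filter
              (fun q : ℕ × ℕ × ℕ × ℕ => q.1 + q.2.1 + q.2.2.1 + q.2.2.2 ≤ n),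
            (1 : ℝ) / (q.2.1 * q.2.2.1 + q.2.1 * q.2.2.2 + q.2.2.1 * q.2.2.2))
      atTop
      (nhds (∫ p in (Set.Icc 0 1 ×ˢ Set.Icc 0 1 ×ˢ Set.Icc 0 1 : Set (ℝ × ℝ × ℝ)),
        if p.1 + p.2.1 + p.2.2 ≤ 1 then
          (1 - (p.1 + p.2.1 + p.2.2)) / (p.1 * p.2.1 + p.1 * p.2.2 + p.2.1 * p.2.2)
        else 0)) := by
  simp only [← integrandJ_eq_ite, ← setIntegral_unitCube_eq_Icc]
  refine (tendsto_rightRiemannSum_of_antitoneOn antitoneOn_integrandJ continuousOn_integrandJ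
    (fun _ => integrandJ_nonneg) integrableOn_integrandJ).congr' ?_
  filter_upwards [eventually_gt_atTop 0] with n hn
  exact (sum_inv_sym_eq_rightRiemannSum hn).symm
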